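/- arXiv:1509.03520 — 2 statements merged into one kernel-verified Lean document; each statement's English description precedes it below -/
import Mathlib

section
/- Suppose a real-valued C¹ function h on [s₀,∞) satisfies |h'(s) + (2/s)h(s)| ≤ C A / s^{3+η} for constants C > 0, A > 0, η ∈ (0,1/2), and A ≥ 2C/η. If at some s₁ ≥ s₀ one has h(s₁) = A²/s₁^{2+η}, then h'(s₁) > -(2+η)A²/s₁^{3+η}; similarly if h(s₁) = -A²/s₁^{2+η} then h'(s₁) < (2+η)A²/s₁^{3+η}. Hence the trajectory transversally exits the region |h(s)| ≤ A²/s^{2+η} at s₁. -/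
open Real

theorem stmt12 (C A η s₀ : ℝ) (hC : 0 < C) (hA : 0 < A)
    (hη : 0 < η) (hη' : η < 1 / 2) (hAC : 2 * C / η ≤ A) (hs₀ : 1 ≤ s₀)
    (h : ℝ → ℝ) (hdiff : ∀ s, s₀ ≤ s → DifferentiableAt ℝ h s)
    (hode : ∀ s, s₀ ≤ s → |deriv h s + (2 / s) * h s| ≤ C * A / s ^ (3 + η))
    (s₁ : ℝ) (hs₁ : s₀ ≤ s₁) :
    (h s₁ = A ^ 2 / s₁ ^ (2 + η) → deriv h s₁ > -(2 + η) * A ^ 2 / s₁ ^ (3 + η)) ∧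
    (h s₁ = -(A ^ 2 / s₁ ^ (2 + η)) → deriv h s₁ < (2 + η) * A ^ 2 / s₁ ^ (3 + η)) := by
  have hs₁pos : (0:ℝ) < s₁ := lt_of_lt_of_le one_pos (le_trans hs₀ hs₁)
  have hP : (0:ℝ) < s₁ ^ (3 + η) := Real.rpow_pos_of_pos hs₁pos _
  have hsplit : s₁ ^ ((3:ℝ) + η) = s₁ * s₁ ^ ((2:ℝ) + η) := by
    rw [show (3:ℝ) + η = 1 + (2 + η) by ring, Real.rpow_add hs₁pos, Real.rpow_one]
  have habs := abs_le.mp (hode s₁ hs₁)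
  have hCA : C * A < η * A ^ 2 := by
    have h1 : 2 * C ≤ A * η := (div_le_iff₀ hη).mp hAC
    nlinarith [mul_pos hC hA]
  constructor
  · intro hval
    have h2 : (2 / s₁) * h s₁ = 2 * A ^ 2 / s₁ ^ ((3:ℝ) + η) := by
      rw [hval, hsplit]; field_simp
    have hlb := habs.1
    rw [h2] at hlb
    have hineq : (-(2 + η) * A ^ 2) < (-(2 * A ^ 2) - C * A) := by nlinarith
    have := (div_lt_div_iff_of_pos_right hP).mpr hineq
    rw [sub_div, neg_div] at this
    linarith
  · intro hval
    have h2 : (2 / s₁) * h s₁ = -(2 * A ^ 2 / s₁ ^ ((3:ℝ) + η)) := by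
      rw [hval, hsplit]; field_simp
    have hub := habs.2
    rw [h2] at hub
    have hineq : (2 * A ^ 2 + C * A) < ((2 + η) * A ^ 2) := by nlinarith
    have := (div_lt_div_iff_of_pos_right hP).mpr hineq
    rw [add_div] at this
    linarith
end

section
/- Kernel estimate for L-semigroup derivatives of Gaussian-type functions: let G(y,x) = e^{s-σ} e^{|x|²/4} (4π(1-e^{-(s-σ)}))^{-N/2} exp(-|y e^{-(s-σ)/2} - x|²/(4(1-e^{-(s-σ)}))). Then for m = 0,1,2,3 there is C = C(N,m) with |∇ₓ^m G(y,x)| ≤ C e^{-m(s-σ)/2} (1 + |x| + |y|)^m e^{|x|²/4} e^{(s-σ)L}(y,x) for all y,x ∈ ℝ^N and s - σ ≥ 1. -/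
/-
After completing the square, `e^{|x|²/4} e^{tL}(y,x) = K e^{q(x)}` with `K > 0` and `q` the
quadratic `q(x) = -ε²/(4b) |x|² + ⟪ε/(2b) y, x⟫ + const`, where `ε = e^{-t/2}` and
`b = 1 - e^{-t}`. Since `q` has vanishing third derivative, Faà di Bruno's formula bounds
`|∇^m e^q|` by `m! e^q D^m` as soon as `|∇q(x)| ≤ D` and `|∇²q| ≤ D²`; the choice
`D = ε (1 + |x| + |y|) / b` works, and `b ≥ 1 - e^{-1}` once `t ≥ 1`.
-/

open MeasureTheory Real
open scoped BigOperators

/-- Mehler's formula: the integral kernel of `e^{tL}` where `L = Δ - (y/2)·∇ + 1`. -/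
noncomputable def mehlerKernel (N : ℕ) (t : ℝ) (y x : EuclideanSpace ℝ (Fin N)) : ℝ :=
  Real.exp t / (4 * Real.pi * (1 - Real.exp (-t))) ^ ((N : ℝ) / 2)
    * Real.exp (-‖(Real.exp (-t / 2)) • y - x‖ ^ 2 / (4 * (1 - Real.exp (-t))))

/-- `G(y,x) = e^{|x|²/4} e^{(s-σ)L}(y,x)`. -/
noncomputable def Gkernel (N : ℕ) (s σ : ℝ) (y x : EuclideanSpace ℝ (Fin N)) : ℝ :=
  Real.exp (‖x‖ ^ 2 / 4) * mehlerKernel N (s - σ) y x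

open Nat
open scoped ContDiff

theorem norm_iteratedFDeriv_exp_comp_le {E : Type*} [NormedAddCommGroup E] [NormedSpace ℝ E]
    {f : E → ℝ} (hf : ContDiff ℝ ∞ f) (n : ℕ) (x : E) {D : ℝ}
    (hD : ∀ i, 1 ≤ i → i ≤ n → ‖iteratedFDeriv ℝ i f x‖ ≤ D ^ i) :
    ‖iteratedFDeriv ℝ n (fun z => exp (f z)) x‖ ≤ n ! * exp (f x) * D ^ n := by
  refine norm_iteratedFDeriv_comp_le (g := exp) contDiff_exp hf (mod_cast le_top) x
    (fun i _ => ?_) hD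
  rw [norm_iteratedFDeriv_eq_norm_iteratedDeriv, iteratedDeriv_eq_iterate, iter_deriv_exp,
    norm_of_nonneg (exp_pos _).le]

section Quadratic

variable {E : Type*} [NormedAddCommGroup E] [InnerProductSpace ℝ E] (a c : ℝ) (w : E)

theorem hasFDerivAt_quadratic (x : E) :
    HasFDerivAt (fun z : E => a * ‖z‖ ^ 2 + inner ℝ w z + c)
      ((2 * a) • innerSL ℝ x + innerSL ℝ w) x := by
  have h := (((hasFDerivAt_id x).norm_sq).const_mul a).add
    ((innerSL ℝ w).hasFDerivAt (x := x)) |>.add_const c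
  refine h.congr_fderiv ?_
  ext u
  simp
  ring

theorem fderiv_quadratic :
    fderiv ℝ (fun z : E => a * ‖z‖ ^ 2 + inner ℝ w z + c)
      = fun x => (2 * a) • innerSL ℝ x + innerSL ℝ w :=
  funext fun x => (hasFDerivAt_quadratic a c w x).fderiv

theorem fderiv_fderiv_quadratic :
    fderiv ℝ (fderiv ℝ (fun z : E => a * ‖z‖ ^ 2 + inner ℝ w z + c))
      = fun _ => (2 * a) • innerSL ℝ (E := E) := by
  rw [fderiv_quadratic]
  exact funext fun x => ((((2 * a) • innerSL ℝ (E := E)).hasFDerivAt).add_const _).fderiv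

theorem norm_iteratedFDeriv_quadratic_le_pow {D : ℝ} {x : E}
    (h₁ : 2 * |a| * ‖x‖ + ‖w‖ ≤ D) (h₂ : 2 * |a| ≤ D ^ 2) :
    ∀ i, 1 ≤ i → ‖iteratedFDeriv ℝ i (fun z : E => a * ‖z‖ ^ 2 + inner ℝ w z + c) x‖ ≤ D ^ i
  | 1, _ => by
    rw [← norm_iteratedFDeriv_fderiv, norm_iteratedFDeriv_zero, fderiv_quadratic, pow_one]
    refine (norm_add_le _ _).trans ?_
    simpa [norm_smul, innerSL_apply_norm, abs_mul] using h₁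
  | 2, _ => by
    rw [← norm_iteratedFDeriv_fderiv, ← norm_iteratedFDeriv_fderiv, norm_iteratedFDeriv_zero,
      fderiv_fderiv_quadratic]
    calc ‖(2 * a) • innerSL ℝ (E := E)‖ ≤ ‖2 * a‖ * ‖innerSL ℝ (E := E)‖ :=
          ContinuousLinearMap.opNorm_smul_le _ _
      _ ≤ 2 * |a| := by
        rw [Real.norm_eq_abs, abs_mul, abs_two]
        exact mul_le_of_le_one_right (by positivity) (norm_innerSL_le ℝ)
      _ ≤ D ^ 2 := h₂
  | k + 3, _ => by
    have hD : 0 ≤ D := le_trans (by positivity) h₁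
    rw [← norm_iteratedFDeriv_fderiv, ← norm_iteratedFDeriv_fderiv, ← norm_iteratedFDeriv_fderiv,
      fderiv_fderiv_quadratic, fderiv_fun_const, Pi.zero_def, iteratedFDeriv_fun_zero]
    simpa using pow_nonneg hD _

theorem norm_iteratedFDeriv_mul_exp_quadratic_le {K D : ℝ} (hK : 0 ≤ K) {x : E}
    (h₁ : 2 * |a| * ‖x‖ + ‖w‖ ≤ D) (h₂ : 2 * |a| ≤ D ^ 2) (n : ℕ) :
    ‖iteratedFDeriv ℝ n (fun z => K * exp (a * ‖z‖ ^ 2 + inner ℝ w z + c)) x‖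
      ≤ n ! * D ^ n * (K * exp (a * ‖x‖ ^ 2 + inner ℝ w x + c)) := by
  have hq : ContDiff ℝ ∞ fun z : E => a * ‖z‖ ^ 2 + inner ℝ w z + c :=
    ((contDiff_const.mul (contDiff_norm_sq ℝ)).add (contDiff_const.inner ℝ contDiff_id)).add
      contDiff_const
  simp_rw [← smul_eq_mul K]
  rw [iteratedFDeriv_const_smul_apply' (hq.exp.contDiffAt.of_le (mod_cast le_top)), norm_smul,
    norm_of_nonneg hK, smul_eq_mul]
  calc K * ‖iteratedFDeriv ℝ n (fun z => exp (a * ‖z‖ ^ 2 + inner ℝ w z + c)) x‖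
      ≤ K * (n ! * exp (a * ‖x‖ ^ 2 + inner ℝ w x + c) * D ^ n) := by
        gcongr
        exact norm_iteratedFDeriv_exp_comp_le hq n x fun i hi _ =>
          norm_iteratedFDeriv_quadratic_le_pow a c w h₁ h₂ i hi
    _ = _ := by ring

theorem quarter_norm_sq_sub_mehlerExponent_eq {ε : ℝ} (hε : 1 - ε ^ 2 ≠ 0) (y x : E) :
    ‖x‖ ^ 2 / 4 - ‖ε • y - x‖ ^ 2 / (4 * (1 - ε ^ 2))
      = -ε ^ 2 / (4 * (1 - ε ^ 2)) * ‖x‖ ^ 2 + inner ℝ ((ε / (2 * (1 - ε ^ 2))) • y) x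
        + -ε ^ 2 * ‖y‖ ^ 2 / (4 * (1 - ε ^ 2)) := by
  rw [norm_sub_sq_real, norm_smul, inner_smul_left, inner_smul_left, Real.norm_eq_abs, mul_pow,
    sq_abs]
  simp only [conj_trivial]
  field_simp
  ring

end Quadratic

theorem exp_neg_half_sq (t : ℝ) : exp (-t / 2) ^ 2 = exp (-t) := by
  rw [← exp_nat_mul]; ring_nf

theorem exp_mul_mehlerKernel_eq {N : ℕ} {t : ℝ} (ht : 0 < t) (y x : EuclideanSpace ℝ (Fin N)) :
    exp (‖x‖ ^ 2 / 4) * mehlerKernel N t y x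
      = exp t / (4 * π * (1 - exp (-t / 2) ^ 2)) ^ ((N : ℝ) / 2)
        * exp (-exp (-t / 2) ^ 2 / (4 * (1 - exp (-t / 2) ^ 2)) * ‖x‖ ^ 2
          + inner ℝ ((exp (-t / 2) / (2 * (1 - exp (-t / 2) ^ 2))) • y) x
          + -exp (-t / 2) ^ 2 * ‖y‖ ^ 2 / (4 * (1 - exp (-t / 2) ^ 2))) := by
  have hb : 1 - exp (-t / 2) ^ 2 ≠ 0 := by
    rw [exp_neg_half_sq]; exact (sub_pos.2 (exp_lt_one_iff.2 (by linarith))).ne'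
  rw [← quarter_norm_sq_sub_mehlerExponent_eq hb, mehlerKernel, exp_neg_half_sq,
    sub_eq_add_neg (‖x‖ ^ 2 / 4), exp_add, neg_div]
  ring

theorem norm_iteratedFDeriv_exp_mul_mehlerKernel_le {N : ℕ} {t : ℝ} (ht : 0 < t) (m : ℕ)
    (y x : EuclideanSpace ℝ (Fin N)) :
    ‖iteratedFDeriv ℝ m (fun x' => exp (‖x'‖ ^ 2 / 4) * mehlerKernel N t y x') x‖
      ≤ m ! * (exp (-t / 2) * (1 + ‖x‖ + ‖y‖) / (1 - exp (-t))) ^ m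
        * (exp (‖x‖ ^ 2 / 4) * mehlerKernel N t y x) := by
  have hb : 0 < 1 - exp (-t / 2) ^ 2 := by
    rw [exp_neg_half_sq]; exact sub_pos.2 (exp_lt_one_iff.2 (by linarith))
  have hε1 : exp (-t / 2) ≤ 1 := exp_le_one_iff.2 (by linarith)
  have hK : 0 ≤ exp t / (4 * π * (1 - exp (-t / 2) ^ 2)) ^ ((N : ℝ) / 2) :=
    div_nonneg (exp_pos t).le (rpow_nonneg (mul_pos (by positivity) hb).le _)
  have hG := exp_mul_mehlerKernel_eq ht y
  rw [← exp_neg_half_sq, funext hG, hG]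
  generalize exp t / (4 * π * (1 - exp (-t / 2) ^ 2)) ^ ((N : ℝ) / 2) = K at hK ⊢
  generalize hε : exp (-t / 2) = ε at hb hε1 ⊢
  have hε0 : 0 < ε := hε ▸ exp_pos _
  have hb1 : 1 - ε ^ 2 ≤ 1 := by nlinarith
  generalize 1 - ε ^ 2 = b at hb hb1 ⊢
  have hX : 1 ≤ 1 + ‖x‖ + ‖y‖ := by linarith [norm_nonneg x, norm_nonneg y]
  have hxy : ‖x‖ + ‖y‖ ≤ 1 + ‖x‖ + ‖y‖ := by linarith
  generalize 1 + ‖x‖ + ‖y‖ = X at hX hxy ⊢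
  have habs : 2 * |-ε ^ 2 / (4 * b)| = ε ^ 2 / (2 * b) := by
    rw [abs_of_nonpos (div_nonpos_of_nonpos_of_nonneg (neg_nonpos.2 (sq_nonneg ε)) (by positivity))]
    field_simp
    ring
  refine norm_iteratedFDeriv_mul_exp_quadratic_le _ _ _ hK ?_ ?_ m
  · have hεx : ε * ‖x‖ ≤ ‖x‖ := mul_le_of_le_one_left (norm_nonneg x) hε1
    calc 2 * |-ε ^ 2 / (4 * b)| * ‖x‖ + ‖(ε / (2 * b)) • y‖
        = ε / b * ((ε * ‖x‖ + ‖y‖) / 2) := by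
          rw [habs, norm_smul, norm_of_nonneg (by positivity)]; ring
      _ ≤ ε / b * X := by gcongr; linarith [norm_nonneg y]
      _ = ε * X / b := by ring
  · have hXb : 1 ≤ X ^ 2 / b := by rw [le_div_iff₀ hb]; nlinarith
    calc 2 * |-ε ^ 2 / (4 * b)| = ε ^ 2 / b / 2 := by rw [habs]; ring
      _ ≤ ε ^ 2 / b * (X ^ 2 / b) := by
          have : 0 ≤ ε ^ 2 / b := by positivity
          nlinarith
      _ = (ε * X / b) ^ 2 := by ring

theorem mehlerKernel_pos {N : ℕ} {t : ℝ} (ht : 0 < t) (y x : EuclideanSpace ℝ (Fin N)) :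
    0 < mehlerKernel N t y x :=
  mul_pos (div_pos (exp_pos t) (rpow_pos_of_pos
    (mul_pos (by positivity) (sub_pos.2 (exp_lt_one_iff.2 (by linarith)))) _)) (exp_pos _)

theorem stmt15_general {N : ℕ} (m : ℕ) :
    ∃ C : ℝ, 0 < C ∧ ∀ (s σ : ℝ), 1 ≤ s - σ → ∀ y x : EuclideanSpace ℝ (Fin N),
      ‖iteratedFDeriv ℝ m (fun x' => Gkernel N s σ y x') x‖ ≤
        C * Real.exp (-(m : ℝ) * (s - σ) / 2) * (1 + ‖x‖ + ‖y‖) ^ m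
          * Real.exp (‖x‖ ^ 2 / 4) * mehlerKernel N (s - σ) y x := by
  have he : 0 < 1 - exp (-1) := sub_pos.2 (exp_lt_one_iff.2 (by norm_num))
  refine ⟨m ! * (1 - exp (-1))⁻¹ ^ m, by positivity, fun s σ hs y x => ?_⟩
  have ht : 0 < s - σ := by linarith
  have hb : (1 - exp (-(s - σ)))⁻¹ ≤ (1 - exp (-1))⁻¹ :=
    inv_anti₀ he (by gcongr)
  have hK := mehlerKernel_pos ht y x
  calc ‖iteratedFDeriv ℝ m (fun x' => Gkernel N s σ y x') x‖
      ≤ m ! * (exp (-(s - σ) / 2) * (1 + ‖x‖ + ‖y‖) / (1 - exp (-(s - σ)))) ^ m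
        * (exp (‖x‖ ^ 2 / 4) * mehlerKernel N (s - σ) y x) :=
        norm_iteratedFDeriv_exp_mul_mehlerKernel_le ht m y x
    _ ≤ m ! * ((1 - exp (-1))⁻¹ * (exp (-(s - σ) / 2) * (1 + ‖x‖ + ‖y‖))) ^ m
        * (exp (‖x‖ ^ 2 / 4) * mehlerKernel N (s - σ) y x) := by
        rw [div_eq_inv_mul]
        gcongr
        exact mul_nonneg (inv_nonneg.2 (sub_nonneg.2 (exp_le_one_iff.2 (by linarith))))
          (by positivity)
    _ = _ := by rw [mul_pow, mul_pow, ← exp_nat_mul]; ring_nf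

theorem stmt15 {N : ℕ} (hN : 1 ≤ N) (m : ℕ) (hm : m ≤ 3) :
    ∃ C : ℝ, 0 < C ∧ ∀ (s σ : ℝ), 1 ≤ s - σ → ∀ y x : EuclideanSpace ℝ (Fin N),
      ‖iteratedFDeriv ℝ m (fun x' => Gkernel N s σ y x') x‖ ≤
        C * Real.exp (-(m : ℝ) * (s - σ) / 2) * (1 + ‖x‖ + ‖y‖) ^ m
          * Real.exp (‖x‖ ^ 2 / 4) * mehlerKernel N (s - σ) y x :=
  stmt15_general m
end
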